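/- arXiv:1209.0444 — 2 statements merged into one kernel-verified Lean document; each statement's English description precedes it below -/
import Mathlib

section
/- Let P be a symmetric positive definite n×n matrix, F a real n×n matrix, U a real n×p matrix and V a real q×n matrix. If there exists μ > 0 such that the (n+p)×(n+p) block matrix [F^T P + P F + μ V^T V, P U; U^T P, −μ I_p] is negative definite, then for every Δ ∈ ℝ^{p×q} with ‖Δ‖₂ ≤ 1 one has (F + U Δ V)^T P + P (F + U Δ V) ≺ 0. -/
open Matrix

/-- Spectral norm at most one: `‖Δ v‖₂ ≤ ‖v‖₂` for all `v`. -/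
def SpecNormLEOne {p q : ℕ} (Δ : Matrix (Fin p) (Fin q) ℝ) : Prop :=
  ∀ v : Fin q → ℝ, (Δ *ᵥ v) ⬝ᵥ (Δ *ᵥ v) ≤ v ⬝ᵥ v

private lemma dot_transpose_mulVec {m k : ℕ} (A : Matrix (Fin m) (Fin k) ℝ)
    (x : Fin k → ℝ) (y : Fin m → ℝ) : x ⬝ᵥ (Aᵀ *ᵥ y) = (A *ᵥ x) ⬝ᵥ y := by
  rw [Matrix.dotProduct_mulVec, Matrix.vecMul_transpose]

/-- Petersen's lemma / scaled bounded-real lemma: if the block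
matrix `[Fᵀ P + P F + μ Vᵀ V, P U; Uᵀ P, −μ I_p]` is negative definite for some
`μ > 0`, then `(F + U Δ V)ᵀ P + P (F + U Δ V) ≺ 0` for every `‖Δ‖₂ ≤ 1`. -/
theorem petersen_lemma
    (n p q : ℕ)
    (P F : Matrix (Fin n) (Fin n) ℝ)
    (U : Matrix (Fin n) (Fin p) ℝ)
    (V : Matrix (Fin q) (Fin n) ℝ)
    (hPsymm : P.IsSymm) (hPpos : P.PosDef)
    (μ : ℝ) (hμ : 0 < μ)
    (h : (-(Matrix.fromBlocks
        (Fᵀ * P + P * F + μ • (Vᵀ * V)) (P * U)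
        (Uᵀ * P) (-(μ • (1 : Matrix (Fin p) (Fin p) ℝ))))).PosDef) :
    ∀ Δ : Matrix (Fin p) (Fin q) ℝ, SpecNormLEOne Δ →
      (-((F + U * Δ * V)ᵀ * P + P * (F + U * Δ * V))).PosDef := by
  intro Δ hΔ
  have hPs : Pᵀ = P := hPsymm
  rw [Matrix.posDef_iff_dotProduct_mulVec]
  constructor
  · -- Hermitian part
    rw [Matrix.IsHermitian, Matrix.conjTranspose_eq_transpose_of_trivial,
      Matrix.transpose_neg, Matrix.transpose_add, Matrix.transpose_mul,
      Matrix.transpose_mul, Matrix.transpose_transpose, hPs]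
    abel
  · intro x hx
    set A : Matrix (Fin n) (Fin n) ℝ := F + U * Δ * V with hA
    set y : Fin q → ℝ := V *ᵥ x with hy
    set w : Fin p → ℝ := Δ *ᵥ y with hw
    have hz : Sum.elim x w ≠ 0 := by
      intro hz
      exact hx (funext fun i => congrFun hz (Sum.inl i))
    have key := (Matrix.posDef_iff_dotProduct_mulVec.mp h).2 hz
    have hident : (-(μ • (1 : Matrix (Fin p) (Fin p) ℝ))) *ᵥ w = -(μ • w) := by
      rw [Matrix.neg_mulVec, Matrix.smul_mulVec, Matrix.one_mulVec]
    have hVV : x ⬝ᵥ ((μ • (Vᵀ * V)) *ᵥ x) = μ * (y ⬝ᵥ y) := by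
      rw [Matrix.smul_mulVec, dotProduct_smul, ← Matrix.mulVec_mulVec,
        dot_transpose_mulVec]
      rfl
    have hww : w ⬝ᵥ (-(μ • w)) = -(μ * (w ⬝ᵥ w)) := by
      rw [dotProduct_neg, dotProduct_smul, smul_eq_mul]
    simp only [star_trivial, Matrix.neg_mulVec, Matrix.fromBlocks_mulVec,
      Sum.elim_comp_inl, Sum.elim_comp_inr, dotProduct_neg,
      sumElim_dotProduct_sumElim, Matrix.add_mulVec, dotProduct_add,
      hident, hVV, hww] at key
    have key' : x ⬝ᵥ ((Fᵀ * P) *ᵥ x) + x ⬝ᵥ ((P * F) *ᵥ x) + μ * (y ⬝ᵥ y)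
        + x ⬝ᵥ ((P * U) *ᵥ w) + w ⬝ᵥ ((Uᵀ * P) *ᵥ x) - μ * (w ⬝ᵥ w) < 0 := by
      linarith [key]
    -- key' : x⬝(FᵀP x) + x⬝(PF x) + μ(y⬝y) + x⬝(PU w) + (w⬝(UᵀP x) − μ(w⬝w)) < 0
    have hnorm : w ⬝ᵥ w ≤ y ⬝ᵥ y := hΔ y
    -- now the goal
    show 0 < _
    simp only [star_trivial, Matrix.neg_mulVec, dotProduct_neg]
    have hgoal : x ⬝ᵥ ((Aᵀ * P + P * A) *ᵥ x)
        = x ⬝ᵥ ((Fᵀ * P) *ᵥ x) + x ⬝ᵥ ((P * F) *ᵥ x)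
          + w ⬝ᵥ ((Uᵀ * P) *ᵥ x) + x ⬝ᵥ ((P * U) *ᵥ w) := by
      have h1 : Aᵀ * P = Fᵀ * P + Vᵀ * (Δᵀ * Uᵀ) * P := by
        rw [hA, Matrix.transpose_add, Matrix.transpose_mul, Matrix.transpose_mul,
          Matrix.add_mul]
      have h2 : P * A = P * F + P * U * (Δ * V) := by
        rw [hA, Matrix.mul_add, Matrix.mul_assoc U Δ V, ← Matrix.mul_assoc P U (Δ * V)]
      have h3 : x ⬝ᵥ ((Vᵀ * (Δᵀ * Uᵀ) * P) *ᵥ x)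
          = w ⬝ᵥ ((Uᵀ * P) *ᵥ x) := by
        rw [← Matrix.mulVec_mulVec, ← Matrix.mulVec_mulVec, ← Matrix.mulVec_mulVec,
          dot_transpose_mulVec, dot_transpose_mulVec, ← Matrix.mulVec_mulVec]
      have hw2 : w = (Δ * V) *ᵥ x := Matrix.mulVec_mulVec x Δ V
      have h4 : (P * U * (Δ * V)) *ᵥ x = (P * U) *ᵥ w := by
        rw [hw2, Matrix.mulVec_mulVec, Matrix.mul_assoc]
      rw [h1, h2]
      simp only [Matrix.add_mulVec, dotProduct_add, h3, h4]
      ring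
    rw [hgoal]
    nlinarith [key', hnorm, hμ]
end

section
/- Let T̄ > 0, ε > 0, let P_i, P_j be symmetric positive definite n×n matrices, A_i a real n×n matrix, and Z : [0, T̄] → S^{3n} a continuously differentiable symmetric matrix function with Y_2^T Z(T̄) Y_2 − Y_1^T Z(0) Y_1 = 0 and such that Ψ_{ij}(T̄) + He(Z(τ) D_n(A_i)) + Z'(τ) ⪯ 0 for all τ ∈ [0, T̄]. Then for every x_0 ∈ ℝ^n, the solution x(τ) = exp(A_i τ) x_0 satisfies x(T̄)^T P_i x(T̄) − x_0^T P_j x_0 + ε ‖x_0‖₂² ≤ 0; equivalently, exp(A_i^T T̄) P_i exp(A_i T̄) − P_j ⪯ −ε I_n, hence exp(A_i^T T̄) P_i exp(A_i T̄) − P_j ≺ 0. -/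
open Matrix

set_option maxHeartbeats 1000000


/-- `Y₁ = [Iₙ 0; Iₙ 0; 0 Iₙ]`. -/
def Y1 (n : ℕ) : Matrix (Fin n ⊕ (Fin n ⊕ Fin n)) (Fin n ⊕ Fin n) ℝ :=
  Matrix.fromBlocks 1 0 (Matrix.fromRows 1 0) (Matrix.fromRows 0 1)

/-- `Y₂ = [0 Iₙ; Iₙ 0; 0 Iₙ]`. -/
def Y2 (n : ℕ) : Matrix (Fin n ⊕ (Fin n ⊕ Fin n)) (Fin n ⊕ Fin n) ℝ :=
  Matrix.fromBlocks 0 1 (Matrix.fromRows 1 0) (Matrix.fromRows 0 1)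

/-- `Dₙ(M) = diag(M, 0ₙ, 0ₙ)`. -/
def Dn {n : ℕ} (M : Matrix (Fin n) (Fin n) ℝ) :
    Matrix (Fin n ⊕ (Fin n ⊕ Fin n)) (Fin n ⊕ (Fin n ⊕ Fin n)) ℝ :=
  Matrix.fromBlocks M 0 0 0

/-- `He(M) = M + Mᵀ`. -/
def He {m : Type*} (M : Matrix m m ℝ) : Matrix m m ℝ := M + Mᵀ

/-- `Ψᵢⱼ(T) = diag(T(Aᵢᵀ Pᵢ + Pᵢ Aᵢ), Pᵢ − Pⱼ + ε Iₙ, 0ₙ)`. -/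
def Psi {n : ℕ} (T ε : ℝ) (Ai Pi Pj : Matrix (Fin n) (Fin n) ℝ) :
    Matrix (Fin n ⊕ (Fin n ⊕ Fin n)) (Fin n ⊕ (Fin n ⊕ Fin n)) ℝ :=
  Matrix.fromBlocks (T • (Aiᵀ * Pi + Pi * Ai)) 0 0
    (Matrix.fromBlocks (Pi - Pj + ε • (1 : Matrix (Fin n) (Fin n) ℝ)) 0 0 0)

section Aux

attribute [local instance] Matrix.linftyOpNormedRing Matrix.linftyOpNormedAlgebra

lemma hasDerivAt_matrix_entry {m : Type*} [Fintype m] [DecidableEq m]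
    {f : ℝ → Matrix m m ℝ} {f' : Matrix m m ℝ} {t : ℝ}
    (hf : HasDerivAt f f' t) (i j : m) :
    HasDerivAt (fun s => f s i j) (f' i j) t :=
  ((LinearMap.toContinuousLinearMap
      (Matrix.entryLinearMap ℝ ℝ i j)).hasFDerivAt.comp_hasDerivAt t hf)

lemma hasDerivAt_exp_entries {n : ℕ} (A : Matrix (Fin n) (Fin n) ℝ) (t : ℝ) (i j : Fin n) :
    HasDerivAt (fun s : ℝ => NormedSpace.exp (s • A) i j)
      ((A * NormedSpace.exp (t • A)) i j) t :=
  hasDerivAt_matrix_entry (hasDerivAt_exp_smul_const' A t) i j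

end Aux

lemma hasDerivAt_expVec {n : ℕ} (A : Matrix (Fin n) (Fin n) ℝ) (x0 : Fin n → ℝ) (t : ℝ)
    (a : Fin n) :
    HasDerivAt (fun s : ℝ => (NormedSpace.exp (s • A) *ᵥ x0) a)
      ((A *ᵥ (NormedSpace.exp (t • A) *ᵥ x0)) a) t := by
  have hs := HasDerivAt.fun_sum
    (fun j (_ : j ∈ (Finset.univ : Finset (Fin n))) =>
      (hasDerivAt_exp_entries A t a j).mul_const (x0 j))
  refine hs.congr_deriv ?_; symm
  rw [Matrix.mulVec_mulVec]
  simp [Matrix.mulVec, dotProduct]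

lemma hasDerivAt_quadForm {m : Type*} [Fintype m]
    {ξ ξd : ℝ → m → ℝ} {M M' : ℝ → Matrix m m ℝ} {t : ℝ}
    (hξ : ∀ a, HasDerivAt (fun s => ξ s a) (ξd t a) t)
    (hM : ∀ a b, HasDerivAt (fun s => M s a b) (M' t a b) t) :
    HasDerivAt (fun s => ξ s ⬝ᵥ (M s *ᵥ ξ s))
      (ξd t ⬝ᵥ (M t *ᵥ ξ t) + ξ t ⬝ᵥ (M' t *ᵥ ξ t) + ξ t ⬝ᵥ (M t *ᵥ ξd t)) t := by
  have h : HasDerivAt (fun s => ∑ a, ∑ b, ξ s a * (M s a b * ξ s b))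
      (∑ a, ∑ b, (ξd t a * (M t a b * ξ t b)
        + ξ t a * (M' t a b * ξ t b + M t a b * ξd t b))) t := by
    apply HasDerivAt.fun_sum; intro a _
    apply HasDerivAt.fun_sum; intro b _
    exact (hξ a).mul ((hM a b).mul (hξ b))
  have hexp : ∀ (u v : m → ℝ) (N : Matrix m m ℝ),
      u ⬝ᵥ (N *ᵥ v) = ∑ a, ∑ b, u a * (N a b * v b) := by
    intro u v N; simp [dotProduct, Matrix.mulVec, Finset.mul_sum]
  convert h using 1
  · funext s; exact hexp _ _ _
  · rw [hexp, hexp, hexp, ← Finset.sum_add_distrib, ← Finset.sum_add_distrib]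
    refine Finset.sum_congr rfl fun a _ => ?_
    rw [← Finset.sum_add_distrib, ← Finset.sum_add_distrib]
    refine Finset.sum_congr rfl fun b _ => ?_
    ring

lemma mulVec_dotProduct_eq {m p : Type*} [Fintype m] [Fintype p]
    (N : Matrix m p ℝ) (u : p → ℝ) (w : m → ℝ) :
    (N *ᵥ u) ⬝ᵥ w = u ⬝ᵥ (Nᵀ *ᵥ w) := by
  rw [dotProduct_comm, Matrix.dotProduct_mulVec, ← Matrix.mulVec_transpose,
    dotProduct_comm]

lemma conj_quadform {m p : Type*} [Fintype m] [Fintype p]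
    (M : Matrix m p ℝ) (N : Matrix m m ℝ) (z : p → ℝ) :
    (M *ᵥ z) ⬝ᵥ (N *ᵥ (M *ᵥ z)) = z ⬝ᵥ ((Mᵀ * N * M) *ᵥ z) := by
  rw [mulVec_dotProduct_eq, Matrix.mulVec_mulVec, Matrix.mulVec_mulVec, Matrix.mul_assoc]

lemma Dn_mulVec {n : ℕ} (M : Matrix (Fin n) (Fin n) ℝ) (u : Fin n → ℝ) (v : Fin n ⊕ Fin n → ℝ) :
    Dn M *ᵥ Sum.elim u v = Sum.elim (M *ᵥ u) 0 := by
  rw [Dn, Matrix.fromBlocks_mulVec]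
  simp

lemma Y1_mulVec {n : ℕ} (u v : Fin n → ℝ) :
    Y1 n *ᵥ Sum.elim u v = Sum.elim u (Sum.elim u v) := by
  rw [Y1, Matrix.fromBlocks_mulVec]
  ext a; cases a with
  | inl i => simp
  | inr b => cases b <;> simp [Matrix.fromRows_mulVec]

lemma Y2_mulVec {n : ℕ} (u v : Fin n → ℝ) :
    Y2 n *ᵥ Sum.elim u v = Sum.elim v (Sum.elim u v) := by
  rw [Y2, Matrix.fromBlocks_mulVec]
  ext a; cases a with
  | inl i => simp
  | inr b => cases b <;> simp [Matrix.fromRows_mulVec]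

lemma psi_quadform {n : ℕ} (T ε : ℝ) (Ai Pi Pj : Matrix (Fin n) (Fin n) ℝ) (u v w : Fin n → ℝ) :
    Sum.elim u (Sum.elim v w) ⬝ᵥ (Psi T ε Ai Pi Pj *ᵥ Sum.elim u (Sum.elim v w))
      = T * (u ⬝ᵥ ((Aiᵀ * Pi + Pi * Ai) *ᵥ u))
        + v ⬝ᵥ ((Pi - Pj + ε • (1 : Matrix (Fin n) (Fin n) ℝ)) *ᵥ v) := by
  rw [Psi, Matrix.fromBlocks_mulVec]
  simp [sumElim_dotProduct_sumElim, Matrix.fromBlocks_mulVec,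
    Matrix.smul_mulVec, dotProduct_smul, smul_eq_mul, ← smul_add,
    Matrix.add_mulVec, dotProduct_add, mul_add]

lemma key_aux {n : ℕ} {T ε : ℝ} (hT : 0 < T)
    (Pi Pj Ai : Matrix (Fin n) (Fin n) ℝ)
    (Z Z' : ℝ → Matrix (Fin n ⊕ (Fin n ⊕ Fin n)) (Fin n ⊕ (Fin n ⊕ Fin n)) ℝ)
    (hZsymm : ∀ τ ∈ Set.Icc (0 : ℝ) T, (Z τ).IsSymm)
    (hZderiv : ∀ τ ∈ Set.Icc (0 : ℝ) T, ∀ a b,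
      HasDerivAt (fun s => Z s a b) (Z' τ a b) τ)
    (hloop : (Y2 n)ᵀ * Z T * Y2 n - (Y1 n)ᵀ * Z 0 * Y1 n = 0)
    (hLMI : ∀ τ ∈ Set.Icc (0 : ℝ) T,
      (-(Psi T ε Ai Pi Pj + He (Z τ * Dn Ai) + Z' τ)).PosSemidef)
    (x0 : Fin n → ℝ) (x : ℝ → Fin n → ℝ)
    (hx : ∀ (t : ℝ) (a : Fin n), HasDerivAt (fun s => x s a) ((Ai *ᵥ x t) a) t)
    (hx0 : x 0 = x0) :
    x T ⬝ᵥ (Pi *ᵥ x T) - x0 ⬝ᵥ (Pj *ᵥ x0) + ε * (x0 ⬝ᵥ x0) ≤ 0 := by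
  classical
  obtain ⟨ξ, hξdef⟩ : ∃ ξ : ℝ → (Fin n ⊕ (Fin n ⊕ Fin n)) → ℝ,
      ξ = fun s => Sum.elim (x s) (Sum.elim x0 (x T)) := ⟨_, rfl⟩
  obtain ⟨ξd, hξddef⟩ : ∃ ξd : ℝ → (Fin n ⊕ (Fin n ⊕ Fin n)) → ℝ,
      ξd = fun t => Sum.elim (Ai *ᵥ x t) 0 := ⟨_, rfl⟩
  obtain ⟨xd, hxddef⟩ : ∃ xd : ℝ → Fin n → ℝ, xd = fun t => Ai *ᵥ x t := ⟨_, rfl⟩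
  obtain ⟨MP, hMPdef⟩ : ∃ MP : ℝ → Matrix (Fin n) (Fin n) ℝ, MP = fun _ => Pi := ⟨_, rfl⟩
  obtain ⟨M0, hM0def⟩ : ∃ M0 : ℝ → Matrix (Fin n) (Fin n) ℝ, M0 = fun _ => 0 := ⟨_, rfl⟩
  have hξDeriv : ∀ t (a : Fin n ⊕ (Fin n ⊕ Fin n)),
      HasDerivAt (fun s => ξ s a) (ξd t a) t := by
    intro t a
    simp only [hξdef, hξddef]
    cases a with
    | inl i => exact hx t i
    | inr b => simpa using hasDerivAt_const t (Sum.elim x0 (x T) b)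
  have hxDeriv : ∀ t (a : Fin n), HasDerivAt (fun s => x s a) (xd t a) t := by
    intro t a
    simp only [hxddef]
    exact hx t a
  set c : ℝ := x0 ⬝ᵥ ((Pi - Pj + ε • (1 : Matrix (Fin n) (Fin n) ℝ)) *ᵥ x0) with hcdef
  set F : ℝ → ℝ := fun s => ξ s ⬝ᵥ (Z s *ᵥ ξ s) + T * (x s ⬝ᵥ (Pi *ᵥ x s)) + s * c with hFdef
  have hFderiv : ∀ τ ∈ Set.Icc (0:ℝ) T,
      HasDerivAt F (ξ τ ⬝ᵥ ((Psi T ε Ai Pi Pj + He (Z τ * Dn Ai) + Z' τ) *ᵥ ξ τ)) τ := by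
    intro τ hτ
    have hV : HasDerivAt (fun s => ξ s ⬝ᵥ (Z s *ᵥ ξ s))
        (ξd τ ⬝ᵥ (Z τ *ᵥ ξ τ) + ξ τ ⬝ᵥ (Z' τ *ᵥ ξ τ)
          + ξ τ ⬝ᵥ (Z τ *ᵥ ξd τ)) τ :=
      hasDerivAt_quadForm (fun a => hξDeriv τ a) (fun a b => hZderiv τ hτ a b)
    have hMP : ∀ a b, HasDerivAt (fun s => MP s a b) (M0 τ a b) τ := by
      intro a b
      simp only [hMPdef, hM0def, Matrix.zero_apply]
      exact hasDerivAt_const τ (Pi a b)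
    have hg0 : HasDerivAt (fun s => x s ⬝ᵥ (MP s *ᵥ x s))
        (xd τ ⬝ᵥ (MP τ *ᵥ x τ) + x τ ⬝ᵥ (M0 τ *ᵥ x τ) + x τ ⬝ᵥ (MP τ *ᵥ xd τ)) τ :=
      hasDerivAt_quadForm (fun a => hxDeriv τ a) hMP
    have hg : HasDerivAt (fun s => x s ⬝ᵥ (Pi *ᵥ x s))
        (xd τ ⬝ᵥ (Pi *ᵥ x τ) + x τ ⬝ᵥ (Pi *ᵥ xd τ)) τ := by
      simpa only [hMPdef, hM0def, Matrix.zero_mulVec, dotProduct_zero,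
        add_zero] using hg0
    have hlin : HasDerivAt (fun s : ℝ => s * c) c τ := by
      simpa using (hasDerivAt_id τ).mul_const c
    have hsum := (hV.add (hg.const_mul T)).add hlin
    refine hsum.congr_deriv ?_; symm
    -- it remains to check the algebraic identity between the two derivatives
    have hZτ : (Z τ)ᵀ = Z τ := (hZsymm τ hτ).eq
    have hPsi : Sum.elim (x τ) (Sum.elim x0 (x T)) ⬝ᵥ
          (Psi T ε Ai Pi Pj *ᵥ Sum.elim (x τ) (Sum.elim x0 (x T)))
        = T * (x τ ⬝ᵥ ((Aiᵀ * Pi + Pi * Ai) *ᵥ x τ)) + c := by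
      rw [hcdef]
      exact psi_quadform T ε Ai Pi Pj (x τ) x0 (x T)
    have hS : x τ ⬝ᵥ ((Aiᵀ * Pi + Pi * Ai) *ᵥ x τ)
        = (Ai *ᵥ x τ) ⬝ᵥ (Pi *ᵥ x τ) + x τ ⬝ᵥ (Pi *ᵥ (Ai *ᵥ x τ)) := by
      rw [Matrix.add_mulVec, dotProduct_add, ← Matrix.mulVec_mulVec,
        ← Matrix.mulVec_mulVec, ← mulVec_dotProduct_eq]
    have hHe : Sum.elim (x τ) (Sum.elim x0 (x T)) ⬝ᵥ
          (He (Z τ * Dn Ai) *ᵥ Sum.elim (x τ) (Sum.elim x0 (x T)))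
        = Sum.elim (Ai *ᵥ x τ) 0 ⬝ᵥ (Z τ *ᵥ Sum.elim (x τ) (Sum.elim x0 (x T)))
          + Sum.elim (x τ) (Sum.elim x0 (x T)) ⬝ᵥ (Z τ *ᵥ Sum.elim (Ai *ᵥ x τ) 0) := by
      rw [He, Matrix.add_mulVec, dotProduct_add]
      have h1 : Sum.elim (x τ) (Sum.elim x0 (x T)) ⬝ᵥ
            ((Z τ * Dn Ai) *ᵥ Sum.elim (x τ) (Sum.elim x0 (x T)))
          = Sum.elim (x τ) (Sum.elim x0 (x T)) ⬝ᵥ (Z τ *ᵥ Sum.elim (Ai *ᵥ x τ) 0) := by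
        rw [← Matrix.mulVec_mulVec, Dn_mulVec]
      have h2 : Sum.elim (x τ) (Sum.elim x0 (x T)) ⬝ᵥ
            ((Z τ * Dn Ai)ᵀ *ᵥ Sum.elim (x τ) (Sum.elim x0 (x T)))
          = Sum.elim (Ai *ᵥ x τ) 0 ⬝ᵥ (Z τ *ᵥ Sum.elim (x τ) (Sum.elim x0 (x T))) := by
        rw [← mulVec_dotProduct_eq, ← Matrix.mulVec_mulVec, Dn_mulVec,
          mulVec_dotProduct_eq, hZτ]
      rw [h1, h2]
      ring
    simp only [hξdef, hξddef, hxddef]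
    rw [Matrix.add_mulVec, Matrix.add_mulVec, dotProduct_add, dotProduct_add,
      hPsi, hHe, hS]
    ring
  have hcont : ContinuousOn F (Set.Icc 0 T) := fun τ hτ =>
    ((hFderiv τ hτ).continuousAt).continuousWithinAt
  have hdiff : DifferentiableOn ℝ F (interior (Set.Icc (0:ℝ) T)) := fun τ hτ =>
    ((hFderiv τ (interior_subset hτ)).differentiableAt).differentiableWithinAt
  have hnonpos : ∀ τ ∈ interior (Set.Icc (0:ℝ) T), deriv F τ ≤ 0 := by
    intro τ hτ
    have hτ' : τ ∈ Set.Icc (0:ℝ) T := interior_subset hτ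
    rw [(hFderiv τ hτ').deriv]
    have h := (hLMI τ hτ').dotProduct_mulVec_nonneg (ξ τ)
    rw [Matrix.neg_mulVec, dotProduct_neg] at h
    simp only [star_trivial] at h
    linarith
  have hanti : AntitoneOn F (Set.Icc 0 T) :=
    antitoneOn_of_deriv_nonpos (convex_Icc 0 T) hcont hdiff hnonpos
  have hFT : F T ≤ F 0 :=
    hanti (Set.left_mem_Icc.2 hT.le) (Set.right_mem_Icc.2 hT.le) hT.le
  have hVloop : ξ T ⬝ᵥ (Z T *ᵥ ξ T) = ξ 0 ⬝ᵥ (Z 0 *ᵥ ξ 0) := by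
    have h1 : ξ T = Y2 n *ᵥ Sum.elim x0 (x T) := by
      rw [Y2_mulVec]; simp only [hξdef]
    have h0 : ξ 0 = Y1 n *ᵥ Sum.elim x0 (x T) := by
      rw [Y1_mulVec]; simp only [hξdef, hx0]
    rw [h1, h0, conj_quadform, conj_quadform, sub_eq_zero.mp hloop]
  have hcval : c = x0 ⬝ᵥ (Pi *ᵥ x0) - x0 ⬝ᵥ (Pj *ᵥ x0) + ε * (x0 ⬝ᵥ x0) := by
    rw [hcdef, Matrix.add_mulVec, Matrix.sub_mulVec, Matrix.smul_mulVec,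
      Matrix.one_mulVec, dotProduct_add, dotProduct_sub,
      dotProduct_smul, smul_eq_mul]
  have hFTval : F T = ξ T ⬝ᵥ (Z T *ᵥ ξ T) + T * (x T ⬝ᵥ (Pi *ᵥ x T)) + T * c := by
    simp only [hFdef]
  have hF0val : F 0 = ξ 0 ⬝ᵥ (Z 0 *ᵥ ξ 0) + T * (x0 ⬝ᵥ (Pi *ᵥ x0)) + 0 * c := by
    simp only [hFdef, hx0]
  by_contra hpos
  push_neg at hpos
  have h1 : 0 < T * (x T ⬝ᵥ (Pi *ᵥ x T) - x0 ⬝ᵥ (Pj *ᵥ x0) + ε * (x0 ⬝ᵥ x0)) :=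
    mul_pos hT hpos
  have h2 : T * (x T ⬝ᵥ (Pi *ᵥ x T) - x0 ⬝ᵥ (Pj *ᵥ x0) + ε * (x0 ⬝ᵥ x0))
      = T * (x T ⬝ᵥ (Pi *ᵥ x T)) + T * c - T * (x0 ⬝ᵥ (Pi *ᵥ x0)) := by
    rw [hcval]; ring
  rw [hFTval, hF0val, hVloop] at hFT
  linarith

/-- the looped-functional LMI together with the looping
condition yields `x(T̄)ᵀ Pᵢ x(T̄) − x₀ᵀ Pⱼ x₀ + ε‖x₀‖² ≤ 0` along
`x(τ) = exp(Aᵢ τ) x₀`; equivalently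
`exp(Aᵢᵀ T̄) Pᵢ exp(Aᵢ T̄) − Pⱼ ⪯ −ε Iₙ`, hence `≺ 0`. -/
theorem looped_functional_discrete_decrease
    (n : ℕ) (T ε : ℝ) (hT : 0 < T) (hε : 0 < ε)
    (Pi Pj Ai : Matrix (Fin n) (Fin n) ℝ)
    (hPisymm : Pi.IsSymm) (hPipos : Pi.PosDef)
    (hPjsymm : Pj.IsSymm) (hPjpos : Pj.PosDef)
    (Z Z' : ℝ → Matrix (Fin n ⊕ (Fin n ⊕ Fin n)) (Fin n ⊕ (Fin n ⊕ Fin n)) ℝ)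
    (hZsymm : ∀ τ ∈ Set.Icc (0 : ℝ) T, (Z τ).IsSymm)
    (hZderiv : ∀ τ ∈ Set.Icc (0 : ℝ) T, ∀ a b,
      HasDerivAt (fun s => Z s a b) (Z' τ a b) τ)
    (hZ'cont : ContinuousOn Z' (Set.Icc (0 : ℝ) T))
    (hloop : (Y2 n)ᵀ * Z T * Y2 n - (Y1 n)ᵀ * Z 0 * Y1 n = 0)
    (hLMI : ∀ τ ∈ Set.Icc (0 : ℝ) T,
      (-(Psi T ε Ai Pi Pj + He (Z τ * Dn Ai) + Z' τ)).PosSemidef) :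
    (∀ x0 : Fin n → ℝ,
      (NormedSpace.exp (T • Ai) *ᵥ x0) ⬝ᵥ (Pi *ᵥ (NormedSpace.exp (T • Ai) *ᵥ x0))
        - x0 ⬝ᵥ (Pj *ᵥ x0) + ε * (x0 ⬝ᵥ x0) ≤ 0) ∧
    (-(NormedSpace.exp (T • Aiᵀ) * Pi * NormedSpace.exp (T • Ai) - Pj
        + ε • (1 : Matrix (Fin n) (Fin n) ℝ))).PosSemidef ∧
    (-(NormedSpace.exp (T • Aiᵀ) * Pi * NormedSpace.exp (T • Ai) - Pj)).PosDef := by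
  classical
  have key : ∀ x0 : Fin n → ℝ,
      (NormedSpace.exp (T • Ai) *ᵥ x0) ⬝ᵥ (Pi *ᵥ (NormedSpace.exp (T • Ai) *ᵥ x0))
        - x0 ⬝ᵥ (Pj *ᵥ x0) + ε * (x0 ⬝ᵥ x0) ≤ 0 := by
    intro x0
    have hx0 : (fun s : ℝ => NormedSpace.exp (s • Ai) *ᵥ x0) 0 = x0 := by
      simp
    have hx : ∀ (t : ℝ) (a : Fin n),
        HasDerivAt (fun s => (fun s : ℝ => NormedSpace.exp (s • Ai) *ᵥ x0) s a)
          ((Ai *ᵥ (fun s : ℝ => NormedSpace.exp (s • Ai) *ᵥ x0) t) a) t :=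
      fun t a => hasDerivAt_expVec Ai x0 t a
    exact key_aux hT Pi Pj Ai Z Z' hZsymm hZderiv hloop hLMI x0
      (fun s : ℝ => NormedSpace.exp (s • Ai) *ᵥ x0) hx hx0
  have hE : NormedSpace.exp (T • Aiᵀ) = (NormedSpace.exp (T • Ai))ᵀ := by
    rw [← Matrix.transpose_smul, Matrix.exp_transpose]
  set Ex := NormedSpace.exp (T • Ai) with hExdef
  have hNsymm : (Exᵀ * Pi * Ex)ᵀ = Exᵀ * Pi * Ex := by
    rw [Matrix.transpose_mul, Matrix.transpose_mul, Matrix.transpose_transpose,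
      hPisymm.eq, Matrix.mul_assoc]
  have hquad : ∀ y : Fin n → ℝ, y ⬝ᵥ ((Exᵀ * Pi * Ex) *ᵥ y)
      = (Ex *ᵥ y) ⬝ᵥ (Pi *ᵥ (Ex *ᵥ y)) := fun y => (conj_quadform Ex Pi y).symm
  refine ⟨key, ?_, ?_⟩
  · rw [Matrix.posSemidef_iff_dotProduct_mulVec]; constructor
    · show _ᴴ = _
      rw [Matrix.conjTranspose_eq_transpose_of_trivial, hE]
      rw [Matrix.transpose_neg, Matrix.transpose_add, Matrix.transpose_sub,
        Matrix.transpose_smul, Matrix.transpose_one, hNsymm, hPjsymm.eq]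
    · intro y
      have hk := key y
      rw [hE]
      simp only [star_trivial, Matrix.neg_mulVec, dotProduct_neg,
        Matrix.add_mulVec, Matrix.sub_mulVec, dotProduct_add,
        dotProduct_sub, Matrix.smul_mulVec, Matrix.one_mulVec,
        dotProduct_smul, smul_eq_mul]
      rw [hquad]
      linarith
  · rw [Matrix.posDef_iff_dotProduct_mulVec]; constructor
    · show _ᴴ = _
      rw [Matrix.conjTranspose_eq_transpose_of_trivial, hE]
      rw [Matrix.transpose_neg, Matrix.transpose_sub, hNsymm, hPjsymm.eq]
    · intro y hy
      have hk := key y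
      have hyy : 0 < y ⬝ᵥ y := by
        have hnn : 0 ≤ y ⬝ᵥ y := Finset.sum_nonneg fun i _ => mul_self_nonneg _
        rcases hnn.lt_or_eq with h | h
        · exact h
        · exact absurd (dotProduct_self_eq_zero.mp h.symm) hy
      rw [hE]
      simp only [star_trivial, Matrix.neg_mulVec, dotProduct_neg,
        Matrix.sub_mulVec, dotProduct_sub]
      rw [hquad]
      nlinarith
end
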